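/- There exists an instance of the VRPSD under the optimal-restocking policy for which the recourse function is not monotone with respect to subsequences even though the monotonicity property holds: there exist a finite customer set N, an integer capacity Q ≥ 1, penalties b^P = b^F = 0, nonnegative symmetric costs c_{0,i}, c_{i,j} satisfying the triangle inequality, independent discrete demands with probability mass functions on ℕ satisfying the monotonicity property, a path p of distinct customers, and a subsequence p' of p such that Q^OR_{p'} > Q^OR_{p}. -/

import Mathlib

open ENNReal MeasureTheory
open scoped Classical

/-- `Ψ(s, q) = max(⌈(s − q)/Q⌉, 0)`. -/
noncomputable def psi (Q s q : ℕ) : ℕ := (⌈((s : ℚ) - (q : ℚ)) / (Q : ℚ)⌉).toNat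

/-- The optimal-restocking (OR) expected cost-to-go `F(i, L, q)`. -/
noncomputable def orF {N : Type*} (ρ : N → PMF ℕ) (Q : ℕ) (cF : N → ℝ) (cP : N → N → ℝ) :
    N → List N → ℕ → ℝ≥0∞
  | _, [], _ => 0
  | i, j :: L', q =>
    min
      (∑' s : ℕ, (ENNReal.ofReal (cF j) * (psi Q s q : ℝ≥0∞)
          + orF ρ Q cF cP j L' (psi Q s q * Q + q - s)) * ρ j s)
      (ENNReal.ofReal (cP i j) +
        ∑' s : ℕ, (ENNReal.ofReal (cF j) * (psi Q s Q : ℝ≥0∞)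
          + orF ρ Q cF cP j L' (psi Q s Q * Q + Q - s)) * ρ j s)

/-- The OR cost-to-go `H(j :: L', q)` of proceeding directly to customer `j`. -/
noncomputable def orH {N : Type*} (ρ : N → PMF ℕ) (Q : ℕ) (cF : N → ℝ) (cP : N → N → ℝ)
    (j : N) (L' : List N) (q : ℕ) : ℝ≥0∞ :=
  ∑' s : ℕ, (ENNReal.ofReal (cF j) * (psi Q s q : ℝ≥0∞)
      + orF ρ Q cF cP j L' (psi Q s q * Q + q - s)) * ρ j s

/-- `Q̄ᴼᴿ_p = H(p, Q)`. -/
noncomputable def QbarOR {N : Type*} (ρ : N → PMF ℕ) (Q : ℕ) (cF : N → ℝ)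
    (cP : N → N → ℝ) : List N → ℝ≥0∞
  | [] => 0
  | j :: L' => orH ρ Q cF cP j L' Q

/-- `Qᴼᴿ_p`: the OR recourse cost of the route `(0, p, 0)` in its best orientation. -/
noncomputable def QOR {N : Type*} (ρ : N → PMF ℕ) (Q : ℕ) (cF : N → ℝ)
    (cP : N → N → ℝ) (p : List N) : ℝ≥0∞ :=
  min (QbarOR ρ Q cF cP p) (QbarOR ρ Q cF cP p.reverse)

/-- The monotonicity property, stated for independent discrete demands via the product
measure of their probability mass functions. -/
def MonotonicityPropertyPMF {n : ℕ} (ρ : Fin n → PMF ℕ) (Q : ℕ) : Prop :=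
  ∀ (St : Finset (Fin n)) (a b : Fin n), a ≠ b → a ∉ St → b ∉ St → ∀ l : ℕ, 1 ≤ l →
    Measure.pi (fun i => (ρ i).toMeasure)
        {ω | (∑ i ∈ St, ω i) ≤ l * Q ∧ l * Q < ∑ i ∈ insert b St, ω i}
      ≤ Measure.pi (fun i => (ρ i).toMeasure)
          {ω | (∑ i ∈ insert a St, ω i) ≤ l * Q ∧
               l * Q < ∑ i ∈ insert b (insert a St), ω i}

/-! ### Auxiliary definitions for the counterexample -/

lemma psi_one (s q : ℕ) : psi 1 s q = s - q := by
  unfold psi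
  rw [Nat.cast_one, div_one]
  have h : ((s : ℚ) - q) = (((s : ℤ) - (q : ℤ) : ℤ) : ℚ) := by push_cast; ring
  rw [h, Int.ceil_intCast]
  omega

/-- Demand of customer `0`: uniform on `{0, 1}`. -/
noncomputable def rho0 : PMF ℕ :=
  PMF.ofFinset (fun s => if s = 0 then 2⁻¹ else if s = 1 then 2⁻¹ else 0) {0, 1}
    (by norm_num [ENNReal.inv_two_add_inv_two])
    (by intro a ha; simp at ha; simp [ha.1, ha.2])

/-- The demand distributions of the three customers. -/
noncomputable def myρ : Fin 3 → PMF ℕ := ![rho0, PMF.pure 0, PMF.pure 1]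

/-- Depot distances. -/
noncomputable def c0v : Fin 3 → ℝ := fun i => if i = 1 then 0 else 1

/-- Customer distances (the discrete metric). -/
noncomputable def cv : Fin 3 → Fin 3 → ℝ := fun i j => if i = j then 0 else 1

noncomputable def cFv : Fin 3 → ℝ := fun i => 2 * c0v i
noncomputable def cPv : Fin 3 → Fin 3 → ℝ := fun i j => c0v i + c0v j - cv i j

lemma tsum_pure (g : ℕ → ℝ≥0∞) (k : ℕ) : ∑' s : ℕ, g s * (PMF.pure k) s = g k := by
  rw [tsum_eq_single k]
  · simp
  · intro b hb; simp [PMF.pure_apply, hb]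

lemma tsum_rho0 (g : ℕ → ℝ≥0∞) : ∑' s : ℕ, g s * rho0 s = g 0 * 2⁻¹ + g 1 * 2⁻¹ := by
  rw [tsum_eq_sum (s := ({0, 1} : Finset ℕ))]
  · simp [rho0]
  · intro b hb; simp at hb; simp [rho0, hb.1, hb.2]

lemma rho0_meas (t : Set ℕ) :
    rho0.toMeasure t = (if 0 ∈ t then 2⁻¹ else 0) + (if 1 ∈ t then 2⁻¹ else 0) := by
  rw [PMF.toMeasure_apply _ (MeasurableSet.of_discrete)]
  rw [tsum_eq_sum (s := ({0, 1} : Finset ℕ))]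
  · by_cases h0 : 0 ∈ t <;> by_cases h1 : 1 ∈ t <;>
      simp [Set.indicator, rho0, h0, h1]
  · intro b hb; simp at hb; simp [Set.indicator, rho0, hb.1, hb.2]

lemma pure_meas (k : ℕ) (t : Set ℕ) :
    (PMF.pure k).toMeasure t = (if k ∈ t then 1 else 0) := by
  rw [PMF.toMeasure_pure_apply _ _ (MeasurableSet.of_discrete)]

/-! ### Equation lemmas -/

lemma orF_nil {N : Type*} (ρ : N → PMF ℕ) (Q : ℕ) (cF : N → ℝ) (cP : N → N → ℝ)
    (i : N) (q : ℕ) : orF ρ Q cF cP i [] q = 0 := rfl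

lemma orF_cons {N : Type*} (ρ : N → PMF ℕ) (Q : ℕ) (cF : N → ℝ) (cP : N → N → ℝ)
    (i j : N) (L : List N) (q : ℕ) :
    orF ρ Q cF cP i (j :: L) q =
      min (orH ρ Q cF cP j L q) (ENNReal.ofReal (cP i j) + orH ρ Q cF cP j L Q) := rfl

lemma QbarOR_cons {N : Type*} (ρ : N → PMF ℕ) (Q : ℕ) (cF : N → ℝ) (cP : N → N → ℝ)
    (j : N) (L : List N) : QbarOR ρ Q cF cP (j :: L) = orH ρ Q cF cP j L Q := rfl

/-! ### Numerical values of costs -/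

lemma fin01 : ¬(0 : Fin 3) = 1 := by decide
lemma fin02 : ¬(0 : Fin 3) = 2 := by decide
lemma fin10 : ¬(1 : Fin 3) = 0 := by decide
lemma fin12 : ¬(1 : Fin 3) = 2 := by decide
lemma fin20 : ¬(2 : Fin 3) = 0 := by decide
lemma fin21 : ¬(2 : Fin 3) = 1 := by decide

lemma cFv0 : cFv 0 = 2 := by norm_num [cFv, c0v, fin01]
lemma cFv1 : cFv 1 = 0 := by norm_num [cFv, c0v]
lemma cFv2 : cFv 2 = 2 := by norm_num [cFv, c0v, fin21]
lemma cPv01 : cPv 0 1 = 0 := by norm_num [cPv, c0v, cv, fin01, fin02, fin10, fin12, fin20, fin21]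
lemma cPv12 : cPv 1 2 = 0 := by norm_num [cPv, c0v, cv, fin01, fin02, fin10, fin12, fin20, fin21]
lemma cPv10 : cPv 1 0 = 0 := by norm_num [cPv, c0v, cv, fin01, fin02, fin10, fin12, fin20, fin21]
lemma cPv02 : cPv 0 2 = 1 := by norm_num [cPv, c0v, cv, fin01, fin02, fin10, fin12, fin20, fin21]
lemma cPv20 : cPv 2 0 = 1 := by norm_num [cPv, c0v, cv, fin01, fin02, fin10, fin12, fin20, fin21]
lemma cPv21 : cPv 2 1 = 0 := by norm_num [cPv, c0v, cv, fin01, fin02, fin10, fin12, fin20, fin21]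

lemma myρ0 : myρ 0 = rho0 := rfl
lemma myρ1 : myρ 1 = PMF.pure 0 := rfl
lemma myρ2 : myρ 2 = PMF.pure 1 := rfl

/-! ### Computation of the recourse values -/

lemma H2 (q : ℕ) : orH myρ 1 cFv cPv 2 [] q = 2 * (((1 : ℕ) - q : ℕ) : ℝ≥0∞) := by
  rw [orH, myρ2, tsum_pure]
  rw [orF_nil, psi_one, cFv2]
  norm_num

lemma H2_1 : orH myρ 1 cFv cPv 2 [] 1 = 0 := by rw [H2]; norm_num
lemma H2_0 : orH myρ 1 cFv cPv 2 [] 0 = 2 := by rw [H2]; norm_num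

lemma H0 (q : ℕ) : orH myρ 1 cFv cPv 0 [] q = 2 * (((1 : ℕ) - q : ℕ) : ℝ≥0∞) * 2⁻¹ := by
  rw [orH, myρ0, tsum_rho0]
  rw [orF_nil, orF_nil, psi_one, psi_one, cFv0]
  norm_num

lemma H0_1 : orH myρ 1 cFv cPv 0 [] 1 = 0 := by rw [H0]; norm_num
lemma H0_0 : orH myρ 1 cFv cPv 0 [] 0 = 1 := by
  rw [H0]
  norm_num
  rw [ENNReal.mul_inv_cancel] <;> norm_num

lemma F02_1 : orF myρ 1 cFv cPv 0 [2] 1 = 0 := by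
  rw [orF_cons, cPv02, H2_1]
  simp

lemma F02_0 : orF myρ 1 cFv cPv 0 [2] 0 = 1 := by
  rw [orF_cons, cPv02, H2_1, H2_0]
  norm_num

lemma F12 (q : ℕ) : orF myρ 1 cFv cPv 1 [2] q = 0 := by
  rw [orF_cons, cPv12, H2_1]
  simp

lemma H12 (q : ℕ) : orH myρ 1 cFv cPv 1 [2] q = 0 := by
  rw [orH, myρ1, tsum_pure]
  rw [psi_one, F12, cFv1]
  simp

lemma F012 (q : ℕ) : orF myρ 1 cFv cPv 0 [1, 2] q = 0 := by
  rw [orF_cons, H12, H12]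
  simp

lemma Qbar_p : QbarOR myρ 1 cFv cPv [0, 1, 2] = 0 := by
  rw [QbarOR_cons, orH, myρ0, tsum_rho0]
  rw [psi_one, psi_one, F012, F012, cFv0]
  norm_num

lemma F10 (q : ℕ) : orF myρ 1 cFv cPv 1 [0] q = 0 := by
  rw [orF_cons, cPv10, H0_1]
  simp

lemma H10 (q : ℕ) : orH myρ 1 cFv cPv 1 [0] q = 0 := by
  rw [orH, myρ1, tsum_pure]
  rw [psi_one, F10, cFv1]
  simp

lemma F210 (q : ℕ) : orF myρ 1 cFv cPv 2 [1, 0] q = 0 := by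
  rw [orF_cons, H10, H10]
  simp

lemma Qbar_p_rev : QbarOR myρ 1 cFv cPv [2, 1, 0] = 0 := by
  rw [QbarOR_cons, orH, myρ2, tsum_pure]
  rw [psi_one, F210, cFv2]
  norm_num

lemma Qbar_p' : QbarOR myρ 1 cFv cPv [0, 2] = 2⁻¹ := by
  rw [QbarOR_cons, orH, myρ0, tsum_rho0]
  rw [psi_one, psi_one]
  norm_num
  rw [F02_1, F02_0]
  simp

lemma F20 : orF myρ 1 cFv cPv 2 [0] 0 = 1 := by
  rw [orF_cons, cPv20, H0_1, H0_0]
  norm_num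

lemma Qbar_p'_rev : QbarOR myρ 1 cFv cPv [2, 0] = 1 := by
  rw [QbarOR_cons, orH, myρ2, tsum_pure]
  rw [psi_one]
  norm_num
  exact F20

/-! ### The product measure -/

def w0 : Fin 3 → ℕ := ![0, 0, 1]
def w1 : Fin 3 → ℕ := ![1, 0, 1]

lemma mem_pi3 (f : Fin 3 → ℕ) (s : Fin 3 → Set ℕ) :
    f ∈ Set.pi Set.univ s ↔ f 0 ∈ s 0 ∧ f 1 ∈ s 1 ∧ f 2 ∈ s 2 := by
  constructor
  · intro h; exact ⟨h 0 trivial, h 1 trivial, h 2 trivial⟩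
  · rintro ⟨h0, h1, h2⟩ i _; fin_cases i <;> assumption

lemma pi_myρ : Measure.pi (fun i => (myρ i).toMeasure) =
    ((2 : ℝ≥0∞)⁻¹) • (Measure.dirac w0 + Measure.dirac w1) := by
  refine Measure.pi_eq fun s hs => ?_
  have hm : MeasurableSet (Set.pi Set.univ s) := MeasurableSet.univ_pi hs
  rw [Fin.prod_univ_three]
  rw [show (myρ 0).toMeasure = rho0.toMeasure from rfl,
      show (myρ 1).toMeasure = (PMF.pure 0).toMeasure from rfl,
      show (myρ 2).toMeasure = (PMF.pure 1).toMeasure from rfl,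
      rho0_meas, pure_meas, pure_meas]
  rw [Measure.smul_apply, Measure.add_apply, Measure.dirac_apply' _ hm,
      Measure.dirac_apply' _ hm]
  rw [Set.indicator_apply, Set.indicator_apply]
  rw [show (w0 ∈ Set.pi Set.univ s) = (w0 0 ∈ s 0 ∧ w0 1 ∈ s 1 ∧ w0 2 ∈ s 2) from
        propext (mem_pi3 _ _),
      show (w1 ∈ Set.pi Set.univ s) = (w1 0 ∈ s 0 ∧ w1 1 ∈ s 1 ∧ w1 2 ∈ s 2) from
        propext (mem_pi3 _ _)]
  rw [show w0 0 = 0 from rfl, show w0 1 = 0 from rfl, show w0 2 = 1 from rfl,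
      show w1 0 = 1 from rfl, show w1 1 = 0 from rfl, show w1 2 = 1 from rfl]
  by_cases h0 : (0 : ℕ) ∈ s 0 <;> by_cases h1 : (1 : ℕ) ∈ s 0 <;>
    by_cases h2 : (0 : ℕ) ∈ s 1 <;> by_cases h3 : (1 : ℕ) ∈ s 2 <;>
    simp [h0, h1, h2, h3, smul_eq_mul, mul_add, ENNReal.inv_two_add_inv_two, add_mul]

/-! ### The monotonicity property holds -/

lemma key_impl (ω : Fin 3 → ℕ) (h0 : ω 0 ≤ 1) (h1 : ω 1 = 0) (h2 : ω 2 = 1)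
    (St : Finset (Fin 3)) (a b : Fin 3) (hab : a ≠ b) (ha : a ∉ St) (hb : b ∉ St)
    (l : ℕ) (hl : 1 ≤ l)
    (h : (∑ i ∈ St, ω i) ≤ l * 1 ∧ l * 1 < ∑ i ∈ insert b St, ω i) :
    (∑ i ∈ insert a St, ω i) ≤ l * 1 ∧
      l * 1 < ∑ i ∈ insert b (insert a St), ω i := by
  have hba : b ∉ insert a St := by
    simp [Finset.mem_insert, hab.symm, hb]
  rw [Finset.sum_insert hb] at h
  rw [Finset.sum_insert ha, Finset.sum_insert hba, Finset.sum_insert ha]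
  obtain ⟨hA, hB⟩ := h
  by_cases hwa : ω a = 0
  · constructor <;> omega
  · exfalso
    have hwb : 1 ≤ ω b := by omega
    have hbound : ∀ i : Fin 3, ω i ≤ 1 := by
      intro i
      fin_cases i
      · exact h0
      · show ω 1 ≤ 1; omega
      · show ω 2 ≤ 1; omega
    have ha1 : a ≠ 1 := by intro hh; rw [hh] at hwa; omega
    have hb1 : b ≠ 1 := by intro hh; rw [hh, h1] at hwb; omega
    have hs : ∑ i ∈ St, ω i = 0 := by
      apply Finset.sum_eq_zero
      intro i hi
      have hia : i ≠ a := fun hh => ha (hh ▸ hi)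
      have hib : i ≠ b := fun hh => hb (hh ▸ hi)
      have hi1 : i = 1 := by
        fin_cases i <;> fin_cases a <;> fin_cases b <;> simp_all
      rw [hi1, h1]
    have := hbound b
    omega

lemma mono_myρ : MonotonicityPropertyPMF myρ 1 := by
  intro St a b hab ha hb l hl
  rw [pi_myρ]
  have hmeas : ∀ (T U : Finset (Fin 3)) (c : ℕ),
      MeasurableSet {ω : Fin 3 → ℕ | (∑ i ∈ T, ω i) ≤ c ∧ c < ∑ i ∈ U, ω i} := by
    intro T U c
    have hT : Measurable fun ω : Fin 3 → ℕ => ∑ i ∈ T, ω i :=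
      Finset.measurable_sum T fun i _ => measurable_pi_apply i
    have hU : Measurable fun ω : Fin 3 → ℕ => ∑ i ∈ U, ω i :=
      Finset.measurable_sum U fun i _ => measurable_pi_apply i
    exact (hT (MeasurableSet.of_discrete (s := {x | x ≤ c}))).inter
      (hU (MeasurableSet.of_discrete (s := {x | c < x})))
  have m1 := hmeas St (insert b St) (l * 1)
  have m2 := hmeas (insert a St) (insert b (insert a St)) (l * 1)
  rw [Measure.smul_apply, Measure.smul_apply, Measure.add_apply, Measure.add_apply,
      Measure.dirac_apply' _ m1, Measure.dirac_apply' _ m1,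
      Measure.dirac_apply' _ m2, Measure.dirac_apply' _ m2]
  have key : ∀ ω : Fin 3 → ℕ, ω 0 ≤ 1 → ω 1 = 0 → ω 2 = 1 →
      Set.indicator {ω : Fin 3 → ℕ | (∑ i ∈ St, ω i) ≤ l * 1 ∧
          l * 1 < ∑ i ∈ insert b St, ω i} (1 : (Fin 3 → ℕ) → ℝ≥0∞) ω ≤
        Set.indicator {ω : Fin 3 → ℕ | (∑ i ∈ insert a St, ω i) ≤ l * 1 ∧
          l * 1 < ∑ i ∈ insert b (insert a St), ω i} (1 : (Fin 3 → ℕ) → ℝ≥0∞) ω := by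
    intro ω h0 h1 h2
    by_cases hω : ω ∈ {ω : Fin 3 → ℕ | (∑ i ∈ St, ω i) ≤ l * 1 ∧
        l * 1 < ∑ i ∈ insert b St, ω i}
    · have hω2 : ω ∈ {ω : Fin 3 → ℕ | (∑ i ∈ insert a St, ω i) ≤ l * 1 ∧
          l * 1 < ∑ i ∈ insert b (insert a St), ω i} :=
        key_impl ω h0 h1 h2 St a b hab ha hb l hl hω
      rw [Set.indicator_of_mem hω, Set.indicator_of_mem hω2]
    · rw [Set.indicator_of_notMem hω]
      exact zero_le
  have k0 := key w0 (by norm_num [w0]) rfl rfl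
  have k1 := key w1 (by norm_num [w1]) rfl rfl
  exact mul_le_mul_right (add_le_add k0 k1) _

/-! ### Side conditions -/

lemma mean_finite : ∀ i : Fin 3, ∑' s : ℕ, (s : ℝ≥0∞) * myρ i s ≠ ⊤ := by
  intro i
  fin_cases i
  · show ∑' s : ℕ, (s : ℝ≥0∞) * rho0 s ≠ ⊤
    rw [tsum_rho0]; norm_num
  · show ∑' s : ℕ, (s : ℝ≥0∞) * (PMF.pure 0) s ≠ ⊤
    rw [tsum_pure]; norm_num
  · show ∑' s : ℕ, (s : ℝ≥0∞) * (PMF.pure 1) s ≠ ⊤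
    rw [tsum_pure]; norm_num

/-- there exists a VRPSD instance under the OR policy (with `b^P = b^F = 0`,
so `c^F_i = 2c_{0,i}` and `c^P_{i,j} = c_{0,i} + c_{0,j} − c_{i,j}`) whose demands satisfy
the monotonicity property, together with a path `p` and a subsequence `p'` of `p`, such
that `Qᴼᴿ_{p'} > Qᴼᴿ_{p}`: the OR recourse is not monotone with respect to subsequences
even under the monotonicity property. -/
theorem or_not_monotone_wrt_subsequences :
    ∃ (n : ℕ) (ρ : Fin n → PMF ℕ) (Q : ℕ) (c0 : Fin n → ℝ) (c : Fin n → Fin n → ℝ)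
      (p p' : List (Fin n)),
      1 ≤ Q ∧
      (∀ i, ∑' s : ℕ, (s : ℝ≥0∞) * ρ i s ≠ ⊤) ∧
      (∀ i, 0 ≤ c0 i) ∧ (∀ i j, 0 ≤ c i j) ∧ (∀ i j, c i j = c j i) ∧
      (∀ i j, c0 j ≤ c0 i + c i j) ∧
      (∀ i j, c i j ≤ c0 i + c0 j) ∧
      (∀ i j k, c i k ≤ c i j + c j k) ∧
      MonotonicityPropertyPMF ρ Q ∧
      p.Nodup ∧ List.Sublist p' p ∧
      QOR ρ Q (fun i => 2 * c0 i) (fun i j => c0 i + c0 j - c i j) p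
        < QOR ρ Q (fun i => 2 * c0 i) (fun i j => c0 i + c0 j - c i j) p' := by
  refine ⟨3, myρ, 1, c0v, cv, [0, 1, 2], [0, 2], le_refl 1, mean_finite, ?_, ?_, ?_, ?_, ?_, ?_,
    mono_myρ, by decide, by decide, ?_⟩
  · intro i; simp only [c0v]; split <;> norm_num
  · intro i j; simp only [cv]; split <;> norm_num
  · intro i j; simp only [cv]; by_cases h : i = j <;> simp [h, eq_comm]
  · intro i j
    by_cases h : i = j
    · subst h; simp [cv]
    · simp only [cv, if_neg h, c0v]
      split_ifs <;> norm_num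
  · intro i j
    by_cases h : i = j
    · subst h
      simp only [cv, if_pos rfl, c0v]
      split_ifs <;> norm_num
    · simp only [cv, if_neg h, c0v]
      split_ifs with hh1 hh2
      · exact absurd (hh1.trans hh2.symm) h
      · norm_num
      · norm_num
      · norm_num
  · intro i j k
    simp only [cv]
    split_ifs <;> simp_all
  · show QOR myρ 1 cFv cPv [0, 1, 2] < QOR myρ 1 cFv cPv [0, 2]
    have hq1 : QOR myρ 1 cFv cPv [0, 1, 2] = 0 := by
      rw [QOR]
      rw [show ([0, 1, 2] : List (Fin 3)).reverse = [2, 1, 0] from rfl]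
      rw [Qbar_p, Qbar_p_rev]
      simp
    have hq2 : QOR myρ 1 cFv cPv [0, 2] = 2⁻¹ := by
      rw [QOR]
      rw [show ([0, 2] : List (Fin 3)).reverse = [2, 0] from rfl]
      rw [Qbar_p', Qbar_p'_rev]
      exact min_eq_left (by norm_num)
    rw [hq1, hq2]
    norm_num
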